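/- Let n be a natural number and let A be an invertible n×n complex matrix (IsUnit A). Then there exists a unitary matrix u ∈ Matrix.unitaryGroup (Fin n) ℂ such that A and u are joined by a continuous path lying entirely inside the set of invertible n×n complex matrices, i.e. JoinedIn {B : Matrix (Fin n) (Fin n) ℂ | IsUnit B} A u. -/

import Mathlib

/-!
Polar decomposition: for a unit `a` of a unital C⋆-algebra, `|a| = √(a⋆a)` is strictly positive
and `u = a |a|⁻¹` is unitary, so `a = u |a|`. Strictly positive elements form a convex set
containing `1`, hence the segment from `|a|` to `1`, multiplied on the left by `u`, is a path of
units from `a` to `u`. Complex matrices with the `L²` operator norm are a C⋆-algebra whose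
topology is the usual one.
-/

open CFC

section CStarAlgebra

variable {A : Type*} [CStarAlgebra A] [PartialOrder A] [StarOrderedRing A]

lemma convex_setOf_isStrictlyPositive : Convex ℝ {a : A | IsStrictlyPositive a} := by
  intro x hx y hy s t hs ht hst
  rcases hs.lt_or_eq with hs | rfl
  · exact (hx.smul hs).add_nonneg (smul_nonneg ht hy.nonneg)
  · obtain rfl : t = 1 := by simpa using hst
    simpa using hy

lemma IsUnit.isStrictlyPositive_abs {a : A} (ha : IsUnit a) : IsStrictlyPositive (abs a) :=
  IsStrictlyPositive.sqrt _ (CStarAlgebra.isStrictlyPositive_iff_eq_star_mul_self.mpr ⟨a, ha, rfl⟩)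

lemma IsUnit.mul_inverse_abs_mem_unitary {a : A} (ha : IsUnit a) :
    a * Ring.inverse (abs a) ∈ unitary A := by
  have hp := ha.isStrictlyPositive_abs
  refine (ha.mul hp.isUnit.ringInverse).mem_unitary_of_star_mul_self ?_
  calc star (a * Ring.inverse (abs a)) * (a * Ring.inverse (abs a))
      = Ring.inverse (abs a) * (abs a * abs a) * Ring.inverse (abs a) := by
        rw [abs_mul_abs, star_mul, ← Ring.inverse_star, hp.isSelfAdjoint.star_eq]
        noncomm_ring
    _ = 1 := by
        rw [← mul_assoc, Ring.inverse_mul_cancel _ hp.isUnit, one_mul,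
          Ring.mul_inverse_cancel _ hp.isUnit]

theorem IsUnit.exists_mem_unitary_joinedIn {a : A} (ha : IsUnit a) :
    ∃ u ∈ unitary A, JoinedIn {x | IsUnit x} a u := by
  have hp := ha.isStrictlyPositive_abs
  set u := a * Ring.inverse (abs a)
  have hau : u * abs a = a := by
    rw [mul_assoc, Ring.inverse_mul_cancel _ hp.isUnit, mul_one]
  have hpath : JoinedIn {x : A | IsStrictlyPositive x} (abs a) 1 :=
    .of_segment_subset (convex_setOf_isStrictlyPositive.segment_subset hp isStrictlyPositive_one)
  have hunits : (u * ·) '' {x : A | IsStrictlyPositive x} ⊆ {x | IsUnit x} := by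
    rintro _ ⟨x, hx, rfl⟩
    exact (ha.mul hp.isUnit.ringInverse).mul hx.isUnit
  refine ⟨u, ha.mul_inverse_abs_mem_unitary, ?_⟩
  simpa only [hau, mul_one] using (hpath.map (continuous_const_mul u)).mono hunits

end CStarAlgebra

/-- Every invertible complex matrix is joined to a unitary matrix by a continuous
path inside the set of invertible matrices. -/
theorem isUnit_joinedIn_unitary (n : ℕ) (A : Matrix (Fin n) (Fin n) ℂ)
    (hA : IsUnit A) :
    ∃ u ∈ Matrix.unitaryGroup (Fin n) ℂ,
      JoinedIn {B : Matrix (Fin n) (Fin n) ℂ | IsUnit B} A u := by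
  open scoped MatrixOrder Matrix.Norms.L2Operator in
  exact hA.exists_mem_unitary_joinedIn
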